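/- arXiv:2102.00665 — 3 statements merged into one kernel-verified Lean document; each statement's English description precedes it below -/
import Mathlib

section
/- Let (G₁,G₂′) be an observable pair generated from an attributed Erdős–Rényi pair G(n,p;m,q) with all probabilities p_{ij}, q_{ij} strictly positive. Then the maximum a posteriori estimator of the hidden permutation Π* given (G₁,G₂′) equals arg min over π ∈ S_n of w₁·Δᵘ(G₁, π⁻¹(G₂′)) + w₂·Δᵃ(G₁, π⁻¹(G₂′)), where w₁ = log(p₁₁p₀₀/(p₁₀p₀₁)) and w₂ = log(q₁₁q₀₀/(q₁₀q₀₁)); that is, any minimizer of this weighted Hamming distance maximizes the posterior probability P(Π* = π | G₁, G₂′). -/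
open MeasureTheory Filter Finset

noncomputable section

/-- The set of user-user vertex pairs: unordered pairs of distinct user vertices. -/
abbrev UU (n : ℕ) : Type := {e : Sym2 (Fin n) // ¬ e.IsDiag}

/-- The set of user-attribute vertex pairs. -/
abbrev UA (n m : ℕ) : Type := Fin n × Fin m

/-- All vertex pairs that can carry an edge. -/
abbrev Edge (n m : ℕ) : Type := UU n ⊕ UA n m

/-- A configuration of the pair `(G₁,G₂)`: for every vertex pair, the pair of edge
indicators in the two graphs. -/
abbrev Conf (n m : ℕ) : Type := Edge n m → Bool × Bool

instance (n : ℕ) : MeasurableSpace (Equiv.Perm (Fin n)) := ⊤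
instance (n : ℕ) : Nonempty (Equiv.Perm (Fin n)) := ⟨1⟩

/-- The joint distribution of the two edge indicators of a single vertex pair. -/
def pairM (a b c d : ℝ) : Measure (Bool × Bool) :=
  a.toNNReal • Measure.dirac (true, true) + b.toNNReal • Measure.dirac (true, false)
  + c.toNNReal • Measure.dirac (false, true) + d.toNNReal • Measure.dirac (false, false)

/-- The attributed Erdős–Rényi pair distribution `G(n,p;m,q)` on configurations. -/
def graphM (n m : ℕ) (p11 p10 p01 p00 q11 q10 q01 q00 : ℝ) : Measure (Conf n m) :=
  Measure.pi (fun e => Sum.elim (fun _ => pairM p11 p10 p01 p00)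
    (fun _ => pairM q11 q10 q01 q00) e)

/-- Sample space: a configuration of `(G₁,G₂)` together with the hidden permutation. -/
abbrev Omega (n m : ℕ) : Type := Conf n m × Equiv.Perm (Fin n)

/-- The full probability distribution: the graph pair together with an independent
uniformly random permutation of the user vertices. -/
def fullM (n m : ℕ) (p11 p10 p01 p00 q11 q10 q01 q00 : ℝ) : Measure (Omega n m) :=
  (graphM n m p11 p10 p01 p00 q11 q10 q01 q00).prod
    ((PMF.uniformOfFintype (Equiv.Perm (Fin n))).toMeasure)

theorem mapNotDiag {n : ℕ} (π : Equiv.Perm (Fin n)) (e : UU n) :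
    ¬ (Sym2.map π e.1).IsDiag := by
  obtain ⟨s, hs⟩ := e
  induction s using Sym2.ind with
  | _ a b =>
    simp only [Sym2.map_pair_eq, Sym2.mk_isDiag_iff] at *
    exact fun h => hs (π.injective h)

/-- The action of a user permutation on vertex pairs. -/
def permEdge {n m : ℕ} (π : Equiv.Perm (Fin n)) : Edge n m → Edge n m :=
  Sum.map (fun e => (⟨Sym2.map π e.1, mapNotDiag π e⟩ : UU n)) (fun iv => (π iv.1, iv.2))

/-- First graph of a configuration. -/
def G1 {n m : ℕ} (c : Conf n m) : Edge n m → Bool := fun e => (c e).1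

/-- Second graph of a configuration. -/
def G2 {n m : ℕ} (c : Conf n m) : Edge n m → Bool := fun e => (c e).2

/-- Apply a user permutation to an attributed graph: vertex `i` is relabeled `π i`. -/
def applyPerm {n m : ℕ} (π : Equiv.Perm (Fin n)) (g : Edge n m → Bool) : Edge n m → Bool :=
  fun e => g (permEdge π⁻¹ e)

/-- The observable pair `(G₁, G₂′)` where `G₂′` is `G₂` anonymized by the hidden
permutation. -/
def obsOf {n m : ℕ} (ω : Omega n m) : (Edge n m → Bool) × (Edge n m → Bool) :=
  (G1 ω.1, applyPerm ω.2 (G2 ω.1))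

/-- Hamming distance restricted to user-user vertex pairs. -/
def deltaU {n m : ℕ} (g h : Edge n m → Bool) : ℕ :=
  ((univ : Finset (UU n)).filter fun e => g (Sum.inl e) ≠ h (Sum.inl e)).card

/-- Hamming distance restricted to user-attribute vertex pairs. -/
def deltaA {n m : ℕ} (g h : Edge n m → Bool) : ℕ :=
  ((univ : Finset (UA n m)).filter fun e => g (Sum.inr e) ≠ h (Sum.inr e)).card

/-- `ψ` functional: for `(a,b,c,d) = (p₁₁,p₁₀,p₀₁,p₀₀)` this is
`(√(p₁₁p₀₀) − √(p₁₀p₀₁))²`. -/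
def psi (a b c d : ℝ) : ℝ := (Real.sqrt (a * d) - Real.sqrt (b * c)) ^ 2

/-- Correlation coefficient of the two edge indicators of one vertex pair. -/
def rho (a b c : ℝ) : ℝ :=
  (a - (a + b) * (a + c)) /
    (Real.sqrt ((a + b) * (1 - (a + b))) * Real.sqrt ((a + c) * (1 - (a + c))))

/-- `(a,b,c,d)` is a probability distribution on the four edge-indicator pairs. -/
def ValidDist (a b c d : ℝ) : Prop := 0 ≤ a ∧ 0 ≤ b ∧ 0 ≤ c ∧ 0 ≤ d ∧ a + b + c + d = 1

/-- Weighted distance difference `δ_π`. -/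
def wdelta {n m : ℕ} (w1 w2 : ℝ) (π : Equiv.Perm (Fin n)) (g h : Edge n m → Bool) : ℝ :=
  w1 * ((deltaU g (applyPerm π h) : ℝ) - (deltaU g h : ℝ))
  + w2 * ((deltaA g (applyPerm π h) : ℝ) - (deltaA g h : ℝ))


namespace MAPAux

variable {n m : ℕ}

lemma permEdge_mul_apply (α β : Equiv.Perm (Fin n)) (e : Edge n m) :
    permEdge (α * β) e = permEdge α (permEdge β e) := by
  rcases e with ⟨s, hs⟩ | iv
  · apply congrArg Sum.inl
    apply Subtype.ext
    show Sym2.map (⇑(α * β)) s = Sym2.map ⇑α (Sym2.map ⇑β s)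
    rw [Sym2.map_map]
    congr 1
  · show Sum.inr ((α * β) iv.1, iv.2) = Sum.inr (α (β iv.1), iv.2)
    rfl

lemma permEdge_one_apply (e : Edge n m) : permEdge (1 : Equiv.Perm (Fin n)) e = e := by
  rcases e with ⟨s, hs⟩ | iv
  · apply congrArg Sum.inl
    apply Subtype.ext
    show Sym2.map (⇑(1 : Equiv.Perm (Fin n))) s = s
    have : ⇑(1 : Equiv.Perm (Fin n)) = id := rfl
    rw [this, Sym2.map_id, id_eq]
  · rfl

lemma permEdge_cancel (σ : Equiv.Perm (Fin n)) (e : Edge n m) :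
    permEdge σ⁻¹ (permEdge σ e) = e := by
  rw [← permEdge_mul_apply, inv_mul_cancel, permEdge_one_apply]

lemma applyPerm_mul (α β : Equiv.Perm (Fin n)) (g : Edge n m → Bool) :
    applyPerm α (applyPerm β g) = applyPerm (α * β) g := by
  funext e
  show g (permEdge β⁻¹ (permEdge α⁻¹ e)) = g (permEdge (α * β)⁻¹ e)
  rw [← permEdge_mul_apply, ← mul_inv_rev]

lemma applyPerm_one (g : Edge n m → Bool) : applyPerm (1 : Equiv.Perm (Fin n)) g = g := by
  funext e
  show g (permEdge (1 : Equiv.Perm (Fin n))⁻¹ e) = g e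
  rw [inv_one, permEdge_one_apply]

lemma applyPerm_cancel (σ : Equiv.Perm (Fin n)) (g : Edge n m → Bool) :
    applyPerm σ (applyPerm σ⁻¹ g) = g := by
  rw [applyPerm_mul, mul_inv_cancel, applyPerm_one]

lemma applyPerm_cancel' (σ : Equiv.Perm (Fin n)) (g : Edge n m → Bool) :
    applyPerm σ⁻¹ (applyPerm σ g) = g := by
  rw [applyPerm_mul, inv_mul_cancel, applyPerm_one]

/-- Probability table for one vertex pair. -/
def pairP (a b c d : ℝ) : Bool × Bool → ℝ
  | (true, true) => a
  | (true, false) => b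
  | (false, true) => c
  | (false, false) => d

lemma pairP_nonneg {a b c d : ℝ} (ha : 0 ≤ a) (hb : 0 ≤ b) (hc : 0 ≤ c) (hd : 0 ≤ d)
    (v : Bool × Bool) : 0 ≤ pairP a b c d v := by
  rcases v with ⟨x, y⟩
  cases x <;> cases y <;> simpa [pairP]

instance instMSCPerm : MeasurableSingletonClass (Equiv.Perm (Fin n)) :=
  ⟨fun _ => MeasurableSpace.measurableSet_top⟩

instance pairM.isFiniteMeasure (a b c d : ℝ) : IsFiniteMeasure (pairM a b c d) := by
  unfold pairM; infer_instance

lemma pairM_singleton (a b c d : ℝ) (v : Bool × Bool) :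
    pairM a b c d {v} = ENNReal.ofReal (pairP a b c d v) := by
  have hd : ∀ w : Bool × Bool, Measure.dirac w ({v} : Set (Bool × Bool))
      = if w = v then 1 else 0 := by
    intro w
    rw [Measure.dirac_apply]
    by_cases h : w = v <;> simp [h]
  rcases v with ⟨x, y⟩
  cases x <;> cases y <;>
    simp [pairM, hd, pairP, ENNReal.ofReal, Prod.ext_iff, mul_one]

lemma graphM_singleton (p11 p10 p01 p00 q11 q10 q01 q00 : ℝ) (f : Conf n m) :
    graphM n m p11 p10 p01 p00 q11 q10 q01 q00 {f}
      = (∏ e : UU n, ENNReal.ofReal (pairP p11 p10 p01 p00 (f (Sum.inl e))))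
        * ∏ e : UA n m, ENNReal.ofReal (pairP q11 q10 q01 q00 (f (Sum.inr e))) := by
  haveI : ∀ e : Edge n m, SigmaFinite (Sum.elim (fun _ => pairM p11 p10 p01 p00)
      (fun _ => pairM q11 q10 q01 q00) e) := by
    rintro (e | e)
    · exact (inferInstance : SigmaFinite (pairM p11 p10 p01 p00))
    · exact (inferInstance : SigmaFinite (pairM q11 q10 q01 q00))
  rw [show ({f} : Set (Conf n m)) = Set.univ.pi (fun e => {f e}) from
      (Set.univ_pi_singleton f).symm]
  rw [graphM, Measure.pi_pi]
  rw [Fintype.prod_sum_type]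
  congr 1
  · exact Finset.prod_congr rfl fun e _ => pairM_singleton _ _ _ _ _
  · exact Finset.prod_congr rfl fun e _ => pairM_singleton _ _ _ _ _

lemma prod_ite_one {E : Type*} [Fintype E] (p : E → Prop) [DecidablePred p] (x : ℝ) :
    ∏ e, (if p e then x else 1) = x ^ (univ.filter p).card := by
  rw [Finset.prod_ite, Finset.prod_const, Finset.prod_const, one_pow, mul_one]

lemma prod_pairP {E : Type*} [Fintype E] (a b c d : ℝ)
    (ha : 0 < a) (hb : 0 < b) (hc : 0 < c) (hd : 0 < d)
    (g h : E → Bool) :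
    ∏ e, pairP a b c d (g e, h e)
      = d ^ Fintype.card E
        * (b / (d * Real.sqrt (b * c / (a * d)))) ^ (univ.filter fun e => g e = true).card
        * (c / (d * Real.sqrt (b * c / (a * d)))) ^ (univ.filter fun e => h e = true).card
        * Real.sqrt (b * c / (a * d)) ^ (univ.filter fun e => g e ≠ h e).card := by
  classical
  set R := Real.sqrt (b * c / (a * d)) with hR
  have hRpos : 0 < R := Real.sqrt_pos.2 (by positivity)
  have hR2 : R ^ 2 = b * c / (a * d) := Real.sq_sqrt (by positivity)
  have key : ∀ e, pairP a b c d (g e, h e)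
      = d * (if g e = true then b / (d * R) else 1) * (if h e = true then c / (d * R) else 1)
        * (if g e ≠ h e then R else 1) := by
    intro e
    cases hge : g e <;> cases hhe : h e <;> simp [pairP]
    · field_simp
    · field_simp
    · -- g e = true, h e = true : need a = d * (b/(d*R)) * (c/(d*R))
      have hRne : R ≠ 0 := ne_of_gt hRpos
      have : d * (b / (d * R)) * (c / (d * R)) = b * c / (d * R ^ 2) := by
        field_simp
      rw [this, hR2]
      field_simp
  simp only [key]
  simp only [Finset.prod_mul_distrib, Finset.prod_const, prod_ite_one]
  rw [Finset.card_univ]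

lemma card_filter_comp_equiv {α : Type*} [Fintype α] (φ : α ≃ α) (P : α → Prop)
    [DecidablePred P] :
    (univ.filter fun e => P (φ e)).card = (univ.filter P).card := by
  classical
  apply Finset.card_bij (fun e _ => φ e)
  · intro a ha
    simp only [Finset.mem_filter, Finset.mem_univ, true_and] at ha ⊢
    exact ha
  · intro a _ a' _ hEq
    exact φ.injective hEq
  · intro b hb
    refine ⟨φ.symm b, ?_, φ.apply_symm_apply b⟩
    simp only [Finset.mem_filter, Finset.mem_univ, true_and] at hb ⊢
    rw [φ.apply_symm_apply]
    exact hb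

/-- The permutation action on user-user pairs as an equivalence. -/
def uuEquiv (σ : Equiv.Perm (Fin n)) : UU n ≃ UU n where
  toFun e := ⟨Sym2.map σ e.1, mapNotDiag σ e⟩
  invFun e := ⟨Sym2.map ⇑σ⁻¹ e.1, mapNotDiag σ⁻¹ e⟩
  left_inv e := by
    apply Subtype.ext
    show Sym2.map ⇑σ⁻¹ (Sym2.map ⇑σ e.1) = e.1
    rw [Sym2.map_map]
    have h : ⇑σ⁻¹ ∘ ⇑σ = id := funext fun x => σ.symm_apply_apply x
    rw [h, Sym2.map_id, id_eq]
  right_inv e := by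
    apply Subtype.ext
    show Sym2.map ⇑σ (Sym2.map ⇑σ⁻¹ e.1) = e.1
    rw [Sym2.map_map]
    have h : ⇑σ ∘ ⇑σ⁻¹ = id := funext fun x => σ.apply_symm_apply x
    rw [h, Sym2.map_id, id_eq]

end MAPAux

open MAPAux

/-- **Lemma 1 (MAP estimator).** Any minimizer of the weighted Hamming distance
`w₁ Δᵘ(G₁,π⁻¹(G₂′)) + w₂ Δᵃ(G₁,π⁻¹(G₂′))` maximizes the posterior probability
`P(Π* = π | G₁, G₂′)`. -/
theorem map_estimator_minimizes_weighted_distance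
    (n m : ℕ) (p11 p10 p01 p00 q11 q10 q01 q00 : ℝ)
    (hp : ValidDist p11 p10 p01 p00) (hq : ValidDist q11 q10 q01 q00)
    (hp0 : 0 < p11) (hp1 : 0 < p10) (hp2 : 0 < p01) (hp3 : 0 < p00)
    (hq0 : 0 < q11) (hq1 : 0 < q10) (hq2 : 0 < q01) (hq3 : 0 < q00)
    (hposp : p10 * p01 < p11 * p00) (hposq : q10 * q01 < q11 * q00)
    (g1 g2 : Edge n m → Bool) (π : Equiv.Perm (Fin n))
    (hmin : ∀ π' : Equiv.Perm (Fin n),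
      Real.log (p11 * p00 / (p10 * p01)) * (deltaU g1 (applyPerm π⁻¹ g2) : ℝ)
        + Real.log (q11 * q00 / (q10 * q01)) * (deltaA g1 (applyPerm π⁻¹ g2) : ℝ) ≤
      Real.log (p11 * p00 / (p10 * p01)) * (deltaU g1 (applyPerm π'⁻¹ g2) : ℝ)
        + Real.log (q11 * q00 / (q10 * q01)) * (deltaA g1 (applyPerm π'⁻¹ g2) : ℝ)) :
    ∀ π' : Equiv.Perm (Fin n),
      ProbabilityTheory.cond
          (fullM n m p11 p10 p01 p00 q11 q10 q01 q00)
          {ω : Omega n m | obsOf ω = (g1, g2)} {ω : Omega n m | ω.2 = π'} ≤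
      ProbabilityTheory.cond
          (fullM n m p11 p10 p01 p00 q11 q10 q01 q00)
          {ω : Omega n m | obsOf ω = (g1, g2)} {ω : Omega n m | ω.2 = π} := by
  classical
  intro π'
  -- Abbreviations
  set μ := fullM n m p11 p10 p01 p00 q11 q10 q01 q00 with hμ
  set A := {ω : Omega n m | obsOf ω = (g1, g2)} with hA
  have hAmeas : MeasurableSet A := (Set.toFinite A).measurableSet
  rw [ProbabilityTheory.cond_apply hAmeas, ProbabilityTheory.cond_apply hAmeas]
  apply mul_le_mul_right
  -- the real-valued likelihood of a permutation
  set Pprod : Equiv.Perm (Fin n) → ℝ := fun σ =>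
    (∏ e : UU n, pairP p11 p10 p01 p00 (g1 (Sum.inl e), applyPerm σ⁻¹ g2 (Sum.inl e)))
      * ∏ e : UA n m, pairP q11 q10 q01 q00 (g1 (Sum.inr e), applyPerm σ⁻¹ g2 (Sum.inr e))
    with hPprod
  have key : ∀ σ : Equiv.Perm (Fin n),
      μ (A ∩ {ω : Omega n m | ω.2 = σ})
        = ENNReal.ofReal (Pprod σ)
          * ((PMF.uniformOfFintype (Equiv.Perm (Fin n))).toMeasure {σ}) := by
    intro σ
    have hset : A ∩ {ω : Omega n m | ω.2 = σ}
        = ({fun e => (g1 e, applyPerm σ⁻¹ g2 e)} : Set (Conf n m)) ×ˢ ({σ} : Set _) := by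
      ext ⟨c, τ⟩
      simp only [hA, Set.mem_inter_iff, Set.mem_setOf_eq, Set.mem_prod, Set.mem_singleton_iff,
        obsOf, Prod.mk.injEq]
      constructor
      · rintro ⟨⟨h1, h2⟩, hτ⟩
        rw [hτ] at h2
        refine ⟨funext fun e => ?_, hτ⟩
        have hG2 : G2 c = applyPerm σ⁻¹ g2 := by
          rw [← h2, applyPerm_cancel']
        have hce : c e = (G1 c e, G2 c e) := rfl
        rw [hce, h1, hG2]
      · rintro ⟨hc, hτ⟩
        subst hc
        refine ⟨⟨rfl, ?_⟩, hτ⟩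
        rw [hτ]
        have hG2 : G2 (fun e => (g1 e, applyPerm σ⁻¹ g2 e)) = applyPerm σ⁻¹ g2 := rfl
        rw [hG2, applyPerm_cancel]
    have h1 : ∀ e : UU n,
        0 ≤ pairP p11 p10 p01 p00 (g1 (Sum.inl e), applyPerm σ⁻¹ g2 (Sum.inl e)) :=
      fun e => pairP_nonneg hp0.le hp1.le hp2.le hp3.le _
    have h2 : ∀ e : UA n m,
        0 ≤ pairP q11 q10 q01 q00 (g1 (Sum.inr e), applyPerm σ⁻¹ g2 (Sum.inr e)) :=
      fun e => pairP_nonneg hq0.le hq1.le hq2.le hq3.le _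
    rw [hset, hμ, fullM, Measure.prod_prod]
    congr 1
    rw [graphM_singleton]
    simp only [hPprod]
    rw [ENNReal.ofReal_mul (Finset.prod_nonneg fun e _ => h1 e),
      ENNReal.ofReal_prod_of_nonneg (fun e _ => h1 e),
      ENNReal.ofReal_prod_of_nonneg (fun e _ => h2 e)]
  rw [key π', key π, PMF.toMeasure_apply_singleton _ _ (measurableSet_singleton _),
    PMF.toMeasure_apply_singleton _ _ (measurableSet_singleton _),
    PMF.uniformOfFintype_apply, PMF.uniformOfFintype_apply]
  apply mul_le_mul_left
  apply ENNReal.ofReal_le_ofReal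
  -- now the real inequality  Pprod π' ≤ Pprod π
  set Rp := Real.sqrt (p10 * p01 / (p11 * p00)) with hRpdef
  set Rq := Real.sqrt (q10 * q01 / (q11 * q00)) with hRqdef
  have hRppos : 0 < Rp := Real.sqrt_pos.2 (by positivity)
  have hRqpos : 0 < Rq := Real.sqrt_pos.2 (by positivity)
  -- counting functions
  have hKuu : ∀ σ : Equiv.Perm (Fin n),
      (univ.filter fun e : UU n => applyPerm σ⁻¹ g2 (Sum.inl e) = true).card
        = (univ.filter fun e : UU n => g2 (Sum.inl e) = true).card := by
    intro σ
    have : ∀ e : UU n, applyPerm σ⁻¹ g2 (Sum.inl e) = g2 (Sum.inl (uuEquiv σ e)) := by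
      intro e
      show g2 (permEdge σ⁻¹⁻¹ (Sum.inl e)) = _
      rw [inv_inv]
      rfl
    simp only [this]
    exact card_filter_comp_equiv (uuEquiv σ) (fun e : UU n => g2 (Sum.inl e) = true)
  have hKua : ∀ σ : Equiv.Perm (Fin n),
      (univ.filter fun e : UA n m => applyPerm σ⁻¹ g2 (Sum.inr e) = true).card
        = (univ.filter fun e : UA n m => g2 (Sum.inr e) = true).card := by
    intro σ
    have : ∀ e : UA n m, applyPerm σ⁻¹ g2 (Sum.inr e) = g2 (Sum.inr ((σ.prodCongr (Equiv.refl (Fin m))) e)) := by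
      intro e
      show g2 (permEdge σ⁻¹⁻¹ (Sum.inr e)) = _
      rw [inv_inv]
      rfl
    simp only [this]
    exact card_filter_comp_equiv (σ.prodCongr (Equiv.refl (Fin m)))
      (fun e : UA n m => g2 (Sum.inr e) = true)
  -- express Pprod via the decomposition
  have hPform : ∀ σ : Equiv.Perm (Fin n), Pprod σ
      = ((p00 ^ Fintype.card (UU n)
            * (p10 / (p00 * Rp)) ^ (univ.filter fun e : UU n => g1 (Sum.inl e) = true).card
            * (p01 / (p00 * Rp)) ^ (univ.filter fun e : UU n => g2 (Sum.inl e) = true).card)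
          * (q00 ^ Fintype.card (UA n m)
            * (q10 / (q00 * Rq)) ^ (univ.filter fun e : UA n m => g1 (Sum.inr e) = true).card
            * (q01 / (q00 * Rq)) ^ (univ.filter fun e : UA n m => g2 (Sum.inr e) = true).card))
        * (Rp ^ deltaU g1 (applyPerm σ⁻¹ g2) * Rq ^ deltaA g1 (applyPerm σ⁻¹ g2)) := by
    intro σ
    simp only [hPprod]
    rw [prod_pairP p11 p10 p01 p00 hp0 hp1 hp2 hp3
      (fun e => g1 (Sum.inl e)) (fun e => applyPerm σ⁻¹ g2 (Sum.inl e))]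
    rw [prod_pairP q11 q10 q01 q00 hq0 hq1 hq2 hq3
      (fun e => g1 (Sum.inr e)) (fun e => applyPerm σ⁻¹ g2 (Sum.inr e))]
    rw [hKuu σ, hKua σ]
    have hdU : (univ.filter fun e : UU n => g1 (Sum.inl e) ≠ applyPerm σ⁻¹ g2 (Sum.inl e)).card
        = deltaU g1 (applyPerm σ⁻¹ g2) := rfl
    have hdA : (univ.filter fun e : UA n m => g1 (Sum.inr e) ≠ applyPerm σ⁻¹ g2 (Sum.inr e)).card
        = deltaA g1 (applyPerm σ⁻¹ g2) := rfl
    rw [hdU, hdA, ← hRpdef, ← hRqdef]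
    ring
  rw [hPform π', hPform π]
  apply mul_le_mul_of_nonneg_left _ (by positivity)
  -- core: R-power inequality via logs
  have hexp : ∀ σ : Equiv.Perm (Fin n),
      Rp ^ deltaU g1 (applyPerm σ⁻¹ g2) * Rq ^ deltaA g1 (applyPerm σ⁻¹ g2)
        = Real.exp ((deltaU g1 (applyPerm σ⁻¹ g2) : ℝ) * Real.log Rp
            + (deltaA g1 (applyPerm σ⁻¹ g2) : ℝ) * Real.log Rq) := by
    intro σ
    rw [Real.exp_add, Real.exp_nat_mul, Real.exp_nat_mul, Real.exp_log hRppos,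
      Real.exp_log hRqpos]
  rw [hexp π', hexp π]
  apply Real.exp_le_exp.2
  have hlogRp : Real.log Rp = -(Real.log (p11 * p00 / (p10 * p01)) / 2) := by
    rw [hRpdef, Real.log_sqrt (by positivity),
      show p10 * p01 / (p11 * p00) = (p11 * p00 / (p10 * p01))⁻¹ by
        rw [← one_div, one_div_div], Real.log_inv]
    ring
  have hlogRq : Real.log Rq = -(Real.log (q11 * q00 / (q10 * q01)) / 2) := by
    rw [hRqdef, Real.log_sqrt (by positivity),
      show q10 * q01 / (q11 * q00) = (q11 * q00 / (q10 * q01))⁻¹ by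
        rw [← one_div, one_div_div], Real.log_inv]
    ring
  have h := hmin π'
  rw [hlogRp, hlogRq]
  nlinarith [h]


end
end

section
/- For any permutation π of the user vertices, the generating function A(x,y,z) = Σ_{g ∈ {0,1}^E} Σ_{h ∈ {0,1}^E} z^{δ_π(g,h)} x^{μ(g,h)} y^{ν(g,h)} factors as A(x,y,z) = Π_{l ≥ 1} A_l(x,z)^{t_l^u} · A_l(y,z)^{t_l^a}, where t_l^u is the number of user-user orbits of size l and t_l^a is the number of user-attribute orbits of size l of the permutation π^E induced by π on the set E of vertex pairs, and A_l(x,z) (respectively A_l(y,z)) is the generating function Σ_{g,h ∈ {0,1}^O} z^{δ_π(g,h)} x^{μ(g,h)} (respectively y^{ν(g,h)}) over any single size-l user-user (respectively user-attribute) orbit O. -/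
open Finset Function

noncomputable section

/-- The permutation `π^E` induced on vertex pairs by a user permutation `π`. -/
def permEdgeE {n m : ℕ} (π : Equiv.Perm (Fin n)) : Equiv.Perm (Edge n m) :=
  Equiv.ofBijective (permEdge π)
    (Finite.injective_iff_bijective.mp
      (Injective.sumMap
        (fun a b hab =>
          Subtype.ext (Sym2.map.injective π.injective (congrArg Subtype.val hab)))
        (fun a b hab => by
          cases a; cases b
          simpa [Prod.ext_iff, π.injective.eq_iff] using hab)))

variable {n m : ℕ}

/-- The orbit of a vertex pair under the induced permutation, as a finite set. -/
def orbitOf (σ : Equiv.Perm (Edge n m)) (e : Edge n m) : Finset (Edge n m) :=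
  univ.filter fun e' => σ.SameCycle e e'

/-- The set of orbits of the induced permutation. -/
def orbitsOf (σ : Equiv.Perm (Edge n m)) : Finset (Finset (Edge n m)) :=
  univ.image (orbitOf σ)

/-- Number of user-user orbits of size `l`. -/
def tU (σ : Equiv.Perm (Edge n m)) (l : ℕ) : ℕ :=
  ((orbitsOf σ).filter fun O => O.card = l ∧ ∀ e ∈ O, e.isLeft).card

/-- Number of user-attribute orbits of size `l`. -/
def tA (σ : Equiv.Perm (Edge n m)) (l : ℕ) : ℕ :=
  ((orbitsOf σ).filter fun O => O.card = l ∧ ∀ e ∈ O, e.isRight).card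

/-- Boolean functions on vertex pairs supported on `S` (vanishing off `S`). -/
def suppFuns (S : Finset (Edge n m)) : Finset (Edge n m → Bool) :=
  univ.filter fun g => ∀ e ∉ S, g e = false

/-- The quantity `δ_π` restricted to a set `S` of vertex pairs. -/
def deltaS (w1 w2 : ℝ) (π : Equiv.Perm (Fin n)) (S : Finset (Edge n m))
    (g h : Edge n m → Bool) : ℝ :=
  w1 * ∑ e ∈ S.filter (fun e => e.isLeft),
      ((if g e ≠ h (permEdge π e) then (1 : ℝ) else 0) - if g e ≠ h e then 1 else 0)
  + w2 * ∑ e ∈ S.filter (fun e => e.isRight),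
      ((if g e ≠ h (permEdge π e) then (1 : ℝ) else 0) - if g e ≠ h e then 1 else 0)

/-- The count `μ_{ij}` over the user-user pairs of `S`. -/
def muS (S : Finset (Edge n m)) (g h : Edge n m → Bool) (i j : Bool) : ℕ :=
  (S.filter fun e => e.isLeft ∧ g e = i ∧ h e = j).card

/-- The count `ν_{ij}` over the user-attribute pairs of `S`. -/
def nuS (S : Finset (Edge n m)) (g h : Edge n m → Bool) (i j : Bool) : ℕ :=
  (S.filter fun e => e.isRight ∧ g e = i ∧ h e = j).card

/-- The monomial `x^{μ(g,h)}`. -/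
def monU (x : Bool → Bool → ℝ) (S : Finset (Edge n m)) (g h : Edge n m → Bool) : ℝ :=
  ∏ i : Bool, ∏ j : Bool, x i j ^ muS S g h i j

/-- The monomial `y^{ν(g,h)}`. -/
def monA (y : Bool → Bool → ℝ) (S : Finset (Edge n m)) (g h : Edge n m → Bool) : ℝ :=
  ∏ i : Bool, ∏ j : Bool, y i j ^ nuS S g h i j

/-- The generating function `A_S(x,y,z) = Σ_{g,h} z^{δ_π(g,h)} x^{μ(g,h)} y^{ν(g,h)}`
of the set `S` of vertex pairs (for `S = E` this is `A(x,y,z)`). -/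
def genF (w1 w2 : ℝ) (π : Equiv.Perm (Fin n)) (x y : Bool → Bool → ℝ) (z : ℝ)
    (S : Finset (Edge n m)) : ℝ :=
  ∑ g ∈ suppFuns S, ∑ h ∈ suppFuns S,
    z ^ deltaS w1 w2 π S g h * monU x S g h * monA y S g h


/-! ### Auxiliary machinery -/

lemma coe_permEdgeE (π : Equiv.Perm (Fin n)) :
    ⇑(permEdgeE (n := n) (m := m) π) = permEdge π := rfl

lemma isLeft_permEdge (π : Equiv.Perm (Fin n)) (e : Edge n m) :
    (permEdge (m := m) π e).isLeft = e.isLeft := by cases e <;> rfl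

lemma mem_orbitOf {σ' : Equiv.Perm (Edge n m)} {e e' : Edge n m} :
    e' ∈ orbitOf σ' e ↔ σ'.SameCycle e e' := by simp [orbitOf]

lemma self_mem_orbitOf (σ' : Equiv.Perm (Edge n m)) (e : Edge n m) :
    e ∈ orbitOf σ' e := mem_orbitOf.2 (Equiv.Perm.SameCycle.refl _ _)

lemma orbitOf_eq_of_mem {σ' : Equiv.Perm (Edge n m)} {e e' : Edge n m}
    (h : e' ∈ orbitOf σ' e) : orbitOf σ' e' = orbitOf σ' e := by
  rw [mem_orbitOf] at h
  ext a
  rw [mem_orbitOf, mem_orbitOf]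
  exact ⟨fun ha => h.trans ha, fun ha => h.symm.trans ha⟩

lemma mem_periodicPts_perm (σ' : Equiv.Perm (Edge n m)) (e : Edge n m) :
    e ∈ Function.periodicPts ⇑σ' := by
  refine Function.mk_mem_periodicPts (orderOf_pos σ') ?_
  show (⇑σ')^[orderOf σ'] e = e
  rw [← Equiv.Perm.coe_pow, pow_orderOf_eq_one]
  rfl

lemma minimalPeriod_perm_pos (σ' : Equiv.Perm (Edge n m)) (e : Edge n m) :
    0 < Function.minimalPeriod ⇑σ' e :=
  Function.minimalPeriod_pos_of_mem_periodicPts (mem_periodicPts_perm σ' e)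

lemma orbitOf_eq_image (σ' : Equiv.Perm (Edge n m)) (e : Edge n m) :
    orbitOf σ' e =
      Finset.image (fun k : Fin (Function.minimalPeriod ⇑σ' e) => (⇑σ')^[(k : ℕ)] e)
        Finset.univ := by
  ext e'
  simp only [mem_orbitOf, Finset.mem_image, Finset.mem_univ, true_and]
  constructor
  · intro h
    obtain ⟨i, -, rfl⟩ := h.exists_pow_eq'
    refine ⟨⟨i % _, Nat.mod_lt _ (minimalPeriod_perm_pos σ' e)⟩, ?_⟩
    rw [Equiv.Perm.coe_pow]
    exact Function.iterate_mod_minimalPeriod_eq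
  · rintro ⟨k, rfl⟩
    exact ⟨(k : ℕ), by rw [zpow_natCast, Equiv.Perm.coe_pow]⟩

lemma iterate_injective_fin (σ' : Equiv.Perm (Edge n m)) (e : Edge n m) :
    Function.Injective
      (fun k : Fin (Function.minimalPeriod ⇑σ' e) => (⇑σ')^[(k : ℕ)] e) := by
  intro a b hab
  exact Fin.ext (Function.iterate_injOn_Iio_minimalPeriod a.2 b.2 hab)

lemma card_orbitOf (σ' : Equiv.Perm (Edge n m)) (e : Edge n m) :
    (orbitOf σ' e).card = Function.minimalPeriod ⇑σ' e := by
  rw [orbitOf_eq_image, Finset.card_image_of_injective _ (iterate_injective_fin σ' e),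
    Finset.card_univ, Fintype.card_fin]

lemma val_finRotate {p : ℕ} (k : Fin p) :
    ((finRotate p k : Fin p) : ℕ) = ((k : ℕ) + 1) % p := by
  rcases p with _ | p
  · exact k.elim0
  · rw [coe_finRotate]
    split
    · next h => subst h; simp
    · next h =>
      have hk : (k : ℕ) ≠ p := fun hh => h (Fin.ext (by simpa using hh))
      have hlt := k.isLt
      rw [Nat.mod_eq_of_lt (by omega)]

lemma iterate_rotate (σ' : Equiv.Perm (Edge n m)) (e : Edge n m)
    (k : Fin (Function.minimalPeriod ⇑σ' e)) :
    σ' ((⇑σ')^[(k : ℕ)] e) =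
      (⇑σ')^[((finRotate _ k : Fin (Function.minimalPeriod ⇑σ' e)) : ℕ)] e := by
  rw [val_finRotate, Function.iterate_mod_minimalPeriod_eq, Function.iterate_succ_apply']

def orbitEquiv (σ' : Equiv.Perm (Edge n m)) (e : Edge n m) :
    Fin (Function.minimalPeriod ⇑σ' e) ≃ {a // a ∈ orbitOf σ' e} :=
  Equiv.ofBijective
    (fun k => ⟨(⇑σ')^[(k : ℕ)] e, by
      rw [orbitOf_eq_image]; exact Finset.mem_image_of_mem _ (Finset.mem_univ k)⟩)
    (by
      rw [Fintype.bijective_iff_injective_and_card]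
      refine ⟨fun a b hab => iterate_injective_fin σ' e (congrArg Subtype.val hab), ?_⟩
      rw [Fintype.card_coe, card_orbitOf, Fintype.card_fin])

def extFun (σ' : Equiv.Perm (Edge n m)) (e : Edge n m)
    (g : Fin (Function.minimalPeriod ⇑σ' e) → Bool) : Edge n m → Bool :=
  fun a => if ha : a ∈ orbitOf σ' e then g ((orbitEquiv σ' e).symm ⟨a, ha⟩) else false

lemma iterate_mem_orbitOf (σ' : Equiv.Perm (Edge n m)) (e : Edge n m)
    (k : Fin (Function.minimalPeriod ⇑σ' e)) : (⇑σ')^[(k : ℕ)] e ∈ orbitOf σ' e := by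
  rw [orbitOf_eq_image]; exact Finset.mem_image_of_mem _ (Finset.mem_univ k)

lemma extFun_iterate (σ' : Equiv.Perm (Edge n m)) (e : Edge n m)
    (g : Fin (Function.minimalPeriod ⇑σ' e) → Bool)
    (k : Fin (Function.minimalPeriod ⇑σ' e)) :
    extFun σ' e g ((⇑σ')^[(k : ℕ)] e) = g k := by
  simp only [extFun, dif_pos (iterate_mem_orbitOf σ' e k)]
  exact congrArg g ((orbitEquiv σ' e).symm_apply_apply k)

lemma mem_suppFuns {S : Finset (Edge n m)} {g : Edge n m → Bool} :
    g ∈ suppFuns S ↔ ∀ e ∉ S, g e = false := by simp [suppFuns]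

lemma extFun_mem_suppFuns (σ' : Equiv.Perm (Edge n m)) (e : Edge n m)
    (g : Fin (Function.minimalPeriod ⇑σ' e) → Bool) :
    extFun σ' e g ∈ suppFuns (orbitOf σ' e) := by
  rw [mem_suppFuns]
  intro a ha
  simp only [extFun, dif_neg ha]

lemma extFun_restrict (σ' : Equiv.Perm (Edge n m)) (e : Edge n m) {g : Edge n m → Bool}
    (hg : g ∈ suppFuns (orbitOf σ' e)) :
    extFun σ' e (fun k => g ((⇑σ')^[(k : ℕ)] e)) = g := by
  funext a
  by_cases ha : a ∈ orbitOf σ' e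
  · simp only [extFun, dif_pos ha]
    exact congrArg g (congrArg Subtype.val ((orbitEquiv σ' e).apply_symm_apply ⟨a, ha⟩))
  · simp only [extFun, dif_neg ha]
    exact ((mem_suppFuns.1 hg) a ha).symm

lemma sum_suppFuns_orbit (σ' : Equiv.Perm (Edge n m)) (e : Edge n m)
    (F : (Edge n m → Bool) → ℝ) :
    ∑ g ∈ suppFuns (orbitOf σ' e), F g
      = ∑ g : Fin (Function.minimalPeriod ⇑σ' e) → Bool, F (extFun σ' e g) := by
  refine Finset.sum_nbij' (i := fun g => fun k => g ((⇑σ')^[(k : ℕ)] e))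
    (j := extFun σ' e) (fun g _ => Finset.mem_univ _)
    (fun g _ => extFun_mem_suppFuns σ' e g)
    (fun g hg => extFun_restrict σ' e hg)
    (fun g _ => funext fun k => extFun_iterate σ' e g k)
    (fun g hg => ?_)
  rw [extFun_restrict σ' e hg]

/-- The canonical generating function of a single cycle of length `l`. -/
def cycGF (w : ℝ) (x : Bool → Bool → ℝ) (z : ℝ) (l : ℕ) : ℝ :=
  ∑ g : Fin l → Bool, ∑ h : Fin l → Bool,
    z ^ (w * ∑ k : Fin l,
        ((if g k ≠ h (finRotate l k) then (1 : ℝ) else 0) - if g k ≠ h k then 1 else 0)) *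
      ∏ i : Bool, ∏ j : Bool, x i j ^ (Finset.univ.filter fun k => g k = i ∧ h k = j).card

lemma isLeft_iterate (π : Equiv.Perm (Fin n)) (k : ℕ) (e : Edge n m) :
    ((⇑(permEdgeE (n := n) (m := m) π))^[k] e).isLeft = e.isLeft := by
  induction k with
  | zero => rfl
  | succ k ih =>
    rw [Function.iterate_succ_apply', ← ih]
    exact isLeft_permEdge π _

lemma isLeft_of_mem_orbitOf {π : Equiv.Perm (Fin n)} {e e' : Edge n m}
    (h : e' ∈ orbitOf (permEdgeE (n := n) (m := m) π) e) : e'.isLeft = e.isLeft := by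
  rw [mem_orbitOf] at h
  obtain ⟨i, -, rfl⟩ := h.exists_pow_eq'
  rw [Equiv.Perm.coe_pow]
  exact isLeft_iterate π i e

lemma isRight_of_mem_orbitOf {π : Equiv.Perm (Fin n)} {e e' : Edge n m}
    (h : e' ∈ orbitOf (permEdgeE (n := n) (m := m) π) e) : e'.isRight = e.isRight := by
  have hL := isLeft_of_mem_orbitOf h
  cases e' <;> cases e <;> simp_all

lemma genF_orbit_left (w1 w2 : ℝ) (π : Equiv.Perm (Fin n)) (x y : Bool → Bool → ℝ) (z : ℝ)
    (e : Edge n m) (hL : ∀ e' ∈ orbitOf (permEdgeE (n := n) (m := m) π) e, e'.isLeft) :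
    genF w1 w2 π x y z (orbitOf (permEdgeE (n := n) (m := m) π) e)
      = cycGF w1 x z (orbitOf (permEdgeE (n := n) (m := m) π) e).card := by
  set σ' : Equiv.Perm (Edge n m) := permEdgeE (n := n) (m := m) π with hσ'
  rw [card_orbitOf]
  unfold genF cycGF
  rw [sum_suppFuns_orbit]
  refine Finset.sum_congr rfl fun g _ => ?_
  rw [sum_suppFuns_orbit]
  refine Finset.sum_congr rfl fun h _ => ?_
  have hfR : (orbitOf σ' e).filter (fun e' => e'.isRight) = ∅ :=
    Finset.filter_false_of_mem (fun e' he' => by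
      have := hL e' he'; cases e' <;> simp_all)
  have hfL : (orbitOf σ' e).filter (fun e' => e'.isLeft) = orbitOf σ' e :=
    Finset.filter_true_of_mem (fun e' he' => hL e' he')
  have hperm : ∀ k : Fin (Function.minimalPeriod ⇑σ' e),
      permEdge π ((⇑σ')^[(k : ℕ)] e)
        = (⇑σ')^[((finRotate _ k : Fin (Function.minimalPeriod ⇑σ' e)) : ℕ)] e :=
    fun k => iterate_rotate σ' e k
  have hdelta : deltaS w1 w2 π (orbitOf σ' e) (extFun σ' e g) (extFun σ' e h)
      = w1 * ∑ k : Fin (Function.minimalPeriod ⇑σ' e),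
          ((if g k ≠ h (finRotate _ k) then (1 : ℝ) else 0) - if g k ≠ h k then 1 else 0) := by
    unfold deltaS
    rw [hfR, hfL, Finset.sum_empty, mul_zero, add_zero]
    congr 1
    rw [orbitOf_eq_image σ' e,
      Finset.sum_image (fun a _ b _ hab => iterate_injective_fin σ' e hab)]
    refine Finset.sum_congr rfl fun k _ => ?_
    rw [extFun_iterate, extFun_iterate, hperm k, extFun_iterate]
  have hmu : ∀ i j : Bool, muS (orbitOf σ' e) (extFun σ' e g) (extFun σ' e h) i j
      = (Finset.univ.filter fun k => g k = i ∧ h k = j).card := by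
    intro i j
    unfold muS
    rw [orbitOf_eq_image σ' e, Finset.filter_image,
      Finset.card_image_of_injective _ (iterate_injective_fin σ' e)]
    congr 1
    refine Finset.filter_congr fun k _ => ?_
    have hkL := hL _ (iterate_mem_orbitOf σ' e k)
    rw [extFun_iterate, extFun_iterate]
    simp only [hkL, true_and]
  have hnu : ∀ i j : Bool, nuS (orbitOf σ' e) (extFun σ' e g) (extFun σ' e h) i j = 0 := by
    intro i j
    unfold nuS
    rw [Finset.card_eq_zero]
    refine Finset.filter_false_of_mem fun e' he' => ?_
    have := hL e' he'
    cases e' <;> simp_all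
  unfold monU monA
  simp only [hdelta, hmu, hnu, pow_zero, Finset.prod_const_one, mul_one]

lemma genF_orbit_right (w1 w2 : ℝ) (π : Equiv.Perm (Fin n)) (x y : Bool → Bool → ℝ) (z : ℝ)
    (e : Edge n m) (hR : ∀ e' ∈ orbitOf (permEdgeE (n := n) (m := m) π) e, e'.isRight) :
    genF w1 w2 π x y z (orbitOf (permEdgeE (n := n) (m := m) π) e)
      = cycGF w2 y z (orbitOf (permEdgeE (n := n) (m := m) π) e).card := by
  set σ' : Equiv.Perm (Edge n m) := permEdgeE (n := n) (m := m) π with hσ'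
  rw [card_orbitOf]
  unfold genF cycGF
  rw [sum_suppFuns_orbit]
  refine Finset.sum_congr rfl fun g _ => ?_
  rw [sum_suppFuns_orbit]
  refine Finset.sum_congr rfl fun h _ => ?_
  have hfL : (orbitOf σ' e).filter (fun e' => e'.isLeft) = ∅ :=
    Finset.filter_false_of_mem (fun e' he' => by
      have := hR e' he'; cases e' <;> simp_all)
  have hfR : (orbitOf σ' e).filter (fun e' => e'.isRight) = orbitOf σ' e :=
    Finset.filter_true_of_mem (fun e' he' => hR e' he')
  have hperm : ∀ k : Fin (Function.minimalPeriod ⇑σ' e),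
      permEdge π ((⇑σ')^[(k : ℕ)] e)
        = (⇑σ')^[((finRotate _ k : Fin (Function.minimalPeriod ⇑σ' e)) : ℕ)] e :=
    fun k => iterate_rotate σ' e k
  have hdelta : deltaS w1 w2 π (orbitOf σ' e) (extFun σ' e g) (extFun σ' e h)
      = w2 * ∑ k : Fin (Function.minimalPeriod ⇑σ' e),
          ((if g k ≠ h (finRotate _ k) then (1 : ℝ) else 0) - if g k ≠ h k then 1 else 0) := by
    unfold deltaS
    rw [hfR, hfL, Finset.sum_empty, mul_zero, zero_add]
    congr 1
    rw [orbitOf_eq_image σ' e,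
      Finset.sum_image (fun a _ b _ hab => iterate_injective_fin σ' e hab)]
    refine Finset.sum_congr rfl fun k _ => ?_
    rw [extFun_iterate, extFun_iterate, hperm k, extFun_iterate]
  have hnu : ∀ i j : Bool, nuS (orbitOf σ' e) (extFun σ' e g) (extFun σ' e h) i j
      = (Finset.univ.filter fun k => g k = i ∧ h k = j).card := by
    intro i j
    unfold nuS
    rw [orbitOf_eq_image σ' e, Finset.filter_image,
      Finset.card_image_of_injective _ (iterate_injective_fin σ' e)]
    congr 1
    refine Finset.filter_congr fun k _ => ?_
    have hkR := hR _ (iterate_mem_orbitOf σ' e k)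
    rw [extFun_iterate, extFun_iterate]
    simp only [hkR, true_and]
  have hmu : ∀ i j : Bool, muS (orbitOf σ' e) (extFun σ' e g) (extFun σ' e h) i j = 0 := by
    intro i j
    unfold muS
    rw [Finset.card_eq_zero]
    refine Finset.filter_false_of_mem fun e' he' => ?_
    have := hR e' he'
    cases e' <;> simp_all
  unfold monU monA
  simp only [hdelta, hmu, hnu, pow_zero, Finset.prod_const_one, one_mul, mul_one]

lemma genF_empty (w1 w2 : ℝ) (π : Equiv.Perm (Fin n)) (x y : Bool → Bool → ℝ) (z : ℝ) :
    genF (n := n) (m := m) w1 w2 π x y z ∅ = 1 := by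
  have h : suppFuns (∅ : Finset (Edge n m)) = {fun _ => false} := by
    ext g
    simp [mem_suppFuns, funext_iff, Finset.mem_singleton]
  unfold genF
  rw [h, Finset.sum_singleton, Finset.sum_singleton]
  simp [deltaS, muS, nuS, monU, monA]

lemma genF_union (w1 w2 : ℝ) (π : Equiv.Perm (Fin n)) (x y : Bool → Bool → ℝ) {z : ℝ}
    (hz : 0 < z) {S T : Finset (Edge n m)} (hST : Disjoint S T)
    (hS : ∀ e ∈ S, permEdge π e ∈ S) (hT : ∀ e ∈ T, permEdge π e ∈ T) :
    genF w1 w2 π x y z (S ∪ T) = genF w1 w2 π x y z S * genF w1 w2 π x y z T := by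
  classical
  set comb : (Edge n m → Bool) → (Edge n m → Bool) → Edge n m → Bool :=
    fun g1 g2 a => g1 a || g2 a with hcomb
  -- pointwise agreement facts
  have hagreeS : ∀ g1, ∀ g2 ∈ suppFuns T, ∀ a ∈ S, comb g1 g2 a = g1 a := by
    intro g1 g2 hg2 a ha
    have haT : a ∉ T := fun haT => (Finset.disjoint_left.1 hST) ha haT
    simp [hcomb, mem_suppFuns.1 hg2 a haT]
  have hagreeT : ∀ g1 ∈ suppFuns S, ∀ g2, ∀ a ∈ T, comb g1 g2 a = g2 a := by
    intro g1 hg1 g2 a ha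
    have haS : a ∉ S := fun haS => (Finset.disjoint_left.1 hST) haS ha
    simp [hcomb, mem_suppFuns.1 hg1 a haS]
  have hglue : ∀ g ∈ suppFuns (S ∪ T),
      comb (fun a => if a ∈ S then g a else false) (fun a => if a ∈ T then g a else false)
        = g := by
    intro g hg
    funext a
    by_cases haS : a ∈ S
    · have haT : a ∉ T := fun haT => (Finset.disjoint_left.1 hST) haS haT
      simp [hcomb, haS, haT]
    · by_cases haT : a ∈ T
      · simp [hcomb, haS, haT]
      · have : a ∉ S ∪ T := by simp [haS, haT]
        simp [hcomb, haS, haT, mem_suppFuns.1 hg a this]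
  have key : ∀ F : (Edge n m → Bool) → ℝ,
      ∑ g ∈ suppFuns (S ∪ T), F g
        = ∑ g1 ∈ suppFuns S, ∑ g2 ∈ suppFuns T, F (comb g1 g2) := by
    intro F
    rw [← Finset.sum_product']
    refine Finset.sum_nbij' (i := fun g => (fun a => if a ∈ S then g a else false,
        fun a => if a ∈ T then g a else false)) (j := fun p => comb p.1 p.2)
      ?_ ?_ ?_ ?_ ?_
    · intro g hg
      rw [Finset.mem_product]
      constructor <;> · rw [mem_suppFuns]; intro a ha; simp [ha]
    · intro p hp
      rw [Finset.mem_product] at hp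
      rw [mem_suppFuns]
      intro a ha
      rw [Finset.mem_union] at ha
      push_neg at ha
      simp [hcomb, mem_suppFuns.1 hp.1 a ha.1, mem_suppFuns.1 hp.2 a ha.2]
    · intro g hg
      exact hglue g hg
    · intro p hp
      rw [Finset.mem_product] at hp
      ext a
      · simp only
        by_cases haS : a ∈ S
        · simp [haS, hagreeS p.1 p.2 hp.2 a haS]
        · simp [haS, (mem_suppFuns.1 hp.1 a haS).symm]
      · simp only
        by_cases haT : a ∈ T
        · simp [haT, hagreeT p.1 hp.1 p.2 a haT]
        · simp [haT, (mem_suppFuns.1 hp.2 a haT).symm]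
    · intro g hg
      rw [hglue g hg]
  -- term factorization
  have hterm : ∀ g1 ∈ suppFuns S, ∀ g2 ∈ suppFuns T, ∀ h1 ∈ suppFuns S, ∀ h2 ∈ suppFuns T,
      z ^ deltaS w1 w2 π (S ∪ T) (comb g1 g2) (comb h1 h2)
          * monU x (S ∪ T) (comb g1 g2) (comb h1 h2)
          * monA y (S ∪ T) (comb g1 g2) (comb h1 h2)
        = (z ^ deltaS w1 w2 π S g1 h1 * monU x S g1 h1 * monA y S g1 h1)
          * (z ^ deltaS w1 w2 π T g2 h2 * monU x T g2 h2 * monA y T g2 h2) := by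
    intro g1 hg1 g2 hg2 h1 hh1 h2 hh2
    have hdS : ∀ p : Edge n m → Prop, ∀ inst : DecidablePred p,
        ∀ ee ∈ S.filter p,
        ((if comb g1 g2 ee ≠ comb h1 h2 (permEdge π ee) then (1:ℝ) else 0)
            - if comb g1 g2 ee ≠ comb h1 h2 ee then 1 else 0)
          = ((if g1 ee ≠ h1 (permEdge π ee) then (1:ℝ) else 0)
            - if g1 ee ≠ h1 ee then 1 else 0) := by
      intro p _ ee hee
      have heS : ee ∈ S := Finset.mem_of_mem_filter ee hee
      rw [hagreeS g1 g2 hg2 ee heS, hagreeS h1 h2 hh2 ee heS,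
        hagreeS h1 h2 hh2 _ (hS ee heS)]
    have hdT : ∀ p : Edge n m → Prop, ∀ inst : DecidablePred p,
        ∀ ee ∈ T.filter p,
        ((if comb g1 g2 ee ≠ comb h1 h2 (permEdge π ee) then (1:ℝ) else 0)
            - if comb g1 g2 ee ≠ comb h1 h2 ee then 1 else 0)
          = ((if g2 ee ≠ h2 (permEdge π ee) then (1:ℝ) else 0)
            - if g2 ee ≠ h2 ee then 1 else 0) := by
      intro p _ ee hee
      have heT : ee ∈ T := Finset.mem_of_mem_filter ee hee
      rw [hagreeT g1 hg1 g2 ee heT, hagreeT h1 hh1 h2 ee heT,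
        hagreeT h1 hh1 h2 _ (hT ee heT)]
    have hdelta : deltaS w1 w2 π (S ∪ T) (comb g1 g2) (comb h1 h2)
        = deltaS w1 w2 π S g1 h1 + deltaS w1 w2 π T g2 h2 := by
      unfold deltaS
      rw [Finset.filter_union, Finset.filter_union,
        Finset.sum_union (Finset.disjoint_filter_filter hST),
        Finset.sum_union (Finset.disjoint_filter_filter hST)]
      rw [Finset.sum_congr rfl (hdS _ _), Finset.sum_congr rfl (hdT _ _),
        Finset.sum_congr rfl (hdS _ _), Finset.sum_congr rfl (hdT _ _)]
      ring
    have hmu : ∀ i j : Bool, muS (S ∪ T) (comb g1 g2) (comb h1 h2) i j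
        = muS S g1 h1 i j + muS T g2 h2 i j := by
      intro i j
      unfold muS
      rw [Finset.filter_union, Finset.card_union_of_disjoint (Finset.disjoint_filter_filter hST)]
      congr 1
      · refine congrArg Finset.card (Finset.filter_congr fun ee hee => ?_)
        rw [hagreeS g1 g2 hg2 ee hee, hagreeS h1 h2 hh2 ee hee]
      · refine congrArg Finset.card (Finset.filter_congr fun ee hee => ?_)
        rw [hagreeT g1 hg1 g2 ee hee, hagreeT h1 hh1 h2 ee hee]
    have hnu : ∀ i j : Bool, nuS (S ∪ T) (comb g1 g2) (comb h1 h2) i j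
        = nuS S g1 h1 i j + nuS T g2 h2 i j := by
      intro i j
      unfold nuS
      rw [Finset.filter_union, Finset.card_union_of_disjoint (Finset.disjoint_filter_filter hST)]
      congr 1
      · refine congrArg Finset.card (Finset.filter_congr fun ee hee => ?_)
        rw [hagreeS g1 g2 hg2 ee hee, hagreeS h1 h2 hh2 ee hee]
      · refine congrArg Finset.card (Finset.filter_congr fun ee hee => ?_)
        rw [hagreeT g1 hg1 g2 ee hee, hagreeT h1 hh1 h2 ee hee]
    have hmonU : monU x (S ∪ T) (comb g1 g2) (comb h1 h2)
        = monU x S g1 h1 * monU x T g2 h2 := by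
      unfold monU
      rw [← Finset.prod_mul_distrib]
      refine Finset.prod_congr rfl fun i _ => ?_
      rw [← Finset.prod_mul_distrib]
      refine Finset.prod_congr rfl fun j _ => ?_
      rw [hmu i j, pow_add]
    have hmonA : monA y (S ∪ T) (comb g1 g2) (comb h1 h2)
        = monA y S g1 h1 * monA y T g2 h2 := by
      unfold monA
      rw [← Finset.prod_mul_distrib]
      refine Finset.prod_congr rfl fun i _ => ?_
      rw [← Finset.prod_mul_distrib]
      refine Finset.prod_congr rfl fun j _ => ?_
      rw [hnu i j, pow_add]
    rw [hdelta, hmonU, hmonA, Real.rpow_add hz]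
    ring
  have L1 : genF w1 w2 π x y z (S ∪ T)
      = ∑ g1 ∈ suppFuns S, ∑ g2 ∈ suppFuns T, ∑ h1 ∈ suppFuns S, ∑ h2 ∈ suppFuns T,
          z ^ deltaS w1 w2 π (S ∪ T) (comb g1 g2) (comb h1 h2)
            * monU x (S ∪ T) (comb g1 g2) (comb h1 h2)
            * monA y (S ∪ T) (comb g1 g2) (comb h1 h2) := by
    unfold genF
    rw [key]
    exact Finset.sum_congr rfl fun g1 _ => Finset.sum_congr rfl fun g2 _ => key _
  rw [L1]
  unfold genF
  rw [Finset.sum_mul_sum]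
  refine Finset.sum_congr rfl fun g1 hg1 => ?_
  refine Finset.sum_congr rfl fun g2 hg2 => ?_
  rw [Finset.sum_mul_sum]
  refine Finset.sum_congr rfl fun h1 hh1 => Finset.sum_congr rfl fun h2 hh2 => ?_
  exact hterm g1 hg1 g2 hg2 h1 hh1 h2 hh2

lemma genF_sup (w1 w2 : ℝ) (π : Equiv.Perm (Fin n)) (x y : Bool → Bool → ℝ) {z : ℝ}
    (hz : 0 < z) (𝒪 : Finset (Finset (Edge n m)))
    (hinv : ∀ O ∈ 𝒪, ∀ e ∈ O, permEdge π e ∈ O)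
    (hdisj : (𝒪 : Set (Finset (Edge n m))).Pairwise Disjoint) :
    genF w1 w2 π x y z (𝒪.sup id) = ∏ O ∈ 𝒪, genF w1 w2 π x y z O := by
  classical
  induction 𝒪 using Finset.induction_on with
  | empty =>
    simp only [Finset.sup_empty, Finset.prod_empty, Finset.bot_eq_empty]
    exact genF_empty w1 w2 π x y z
  | @insert O 𝒪 hO ih =>
    rw [Finset.sup_insert, Finset.prod_insert hO, Finset.sup_eq_union]
    simp only [id_eq]
    have hOmem : O ∈ insert O 𝒪 := Finset.mem_insert_self O 𝒪
    have hdOsup : Disjoint O (𝒪.sup id) := by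
      rw [Finset.disjoint_sup_right]
      intro O' hO'
      exact hdisj hOmem (Finset.mem_insert_of_mem hO') (fun hh => hO (hh ▸ hO'))
    have hsupinv : ∀ e ∈ 𝒪.sup id, permEdge π e ∈ 𝒪.sup id := by
      intro e he
      rw [Finset.mem_sup] at he ⊢
      obtain ⟨O', hO', heO'⟩ := he
      exact ⟨O', hO', hinv O' (Finset.mem_insert_of_mem hO') e heO'⟩
    rw [genF_union w1 w2 π x y hz hdOsup (hinv O hOmem) hsupinv]
    rw [ih (fun O' hO' => hinv O' (Finset.mem_insert_of_mem hO'))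
      (hdisj.mono (by simp [Finset.coe_insert, Set.subset_insert]))]

/-- **Fact 1 (cycle decomposition of the generating function).** For any choice of
representative size-`l` user-user orbits `repU l` and user-attribute orbits `repA l`,
`A(x,y,z) = Π_{l ≥ 1} A_l(x,z)^{t_l^u} A_l(y,z)^{t_l^a}`. -/
theorem genF_cycle_decomposition
    (n m : ℕ) (π : Equiv.Perm (Fin n)) (w1 w2 : ℝ)
    (x y : Bool → Bool → ℝ) (z : ℝ) (hz : 0 < z)
    (repU repA : ℕ → Edge n m)
    (hrepU : ∀ l, tU (permEdgeE (n := n) (m := m) π) l ≠ 0 →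
      (repU l).isLeft ∧ (orbitOf (permEdgeE (n := n) (m := m) π) (repU l)).card = l)
    (hrepA : ∀ l, tA (permEdgeE (n := n) (m := m) π) l ≠ 0 →
      (repA l).isRight ∧ (orbitOf (permEdgeE (n := n) (m := m) π) (repA l)).card = l) :
    genF w1 w2 π x y z (univ : Finset (Edge n m)) =
      ∏ l ∈ Finset.Icc 1 (Fintype.card (Edge n m)),
        genF w1 w2 π x y z (orbitOf (permEdgeE (n := n) (m := m) π) (repU l)) ^ tU (permEdgeE (n := n) (m := m) π) l *
          genF w1 w2 π x y z (orbitOf (permEdgeE (n := n) (m := m) π) (repA l)) ^ tA (permEdgeE (n := n) (m := m) π) l := by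
  have horbmem : ∀ e : Edge n m, orbitOf (permEdgeE (n := n) (m := m) π) e
      ∈ orbitsOf (permEdgeE (n := n) (m := m) π) :=
    fun e => Finset.mem_image_of_mem _ (Finset.mem_univ e)
  have h1 : genF w1 w2 π x y z (univ : Finset (Edge n m))
      = ∏ O ∈ orbitsOf (permEdgeE (n := n) (m := m) π), genF w1 w2 π x y z O := by
    have hsup : ((orbitsOf (permEdgeE (n := n) (m := m) π)).sup id)
        = (univ : Finset (Edge n m)) := by
      ext a
      simp only [Finset.mem_sup, id_eq, Finset.mem_univ, iff_true]
      exact ⟨_, horbmem a, self_mem_orbitOf _ a⟩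
    rw [← hsup]
    refine genF_sup w1 w2 π x y hz _ ?_ ?_
    · intro O hO e he
      obtain ⟨a, -, rfl⟩ := Finset.mem_image.1 hO
      rw [mem_orbitOf] at he ⊢
      exact he.trans ⟨1, by rw [zpow_one]; rfl⟩
    · intro O1 h1 O2 h2 hne
      rw [Finset.mem_coe] at h1 h2
      obtain ⟨a1, -, rfl⟩ := Finset.mem_image.1 h1
      obtain ⟨a2, -, rfl⟩ := Finset.mem_image.1 h2
      rw [Finset.disjoint_left]
      intro a ha1 ha2
      exact hne ((orbitOf_eq_of_mem ha1).symm.trans (orbitOf_eq_of_mem ha2))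
  have hcard_mem : ∀ O ∈ orbitsOf (permEdgeE (n := n) (m := m) π),
      O.card ∈ Finset.Icc 1 (Fintype.card (Edge n m)) := by
    intro O hO
    obtain ⟨a, -, rfl⟩ := Finset.mem_image.1 hO
    rw [Finset.mem_Icc]
    exact ⟨Finset.card_pos.2 ⟨a, self_mem_orbitOf _ a⟩, Finset.card_le_univ _⟩
  rw [h1, ← Finset.prod_fiberwise_of_maps_to hcard_mem (fun O => genF w1 w2 π x y z O)]
  refine Finset.prod_congr rfl fun l hl => ?_
  have hsplit : ((orbitsOf (permEdgeE (n := n) (m := m) π)).filter fun O => O.card = l)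
      = ((orbitsOf (permEdgeE (n := n) (m := m) π)).filter
            fun O => O.card = l ∧ ∀ e ∈ O, e.isLeft)
        ∪ ((orbitsOf (permEdgeE (n := n) (m := m) π)).filter
            fun O => O.card = l ∧ ∀ e ∈ O, e.isRight) := by
    ext O
    simp only [Finset.mem_filter, Finset.mem_union]
    constructor
    · rintro ⟨hO, hc⟩
      obtain ⟨a, -, rfl⟩ := Finset.mem_image.1 hO
      cases a with
      | inl a =>
        exact Or.inl ⟨hO, hc, fun e' he' => by rw [isLeft_of_mem_orbitOf he']; rfl⟩
      | inr a =>
        exact Or.inr ⟨hO, hc, fun e' he' => by rw [isRight_of_mem_orbitOf he']; rfl⟩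
    · rintro (⟨hO, hc, -⟩ | ⟨hO, hc, -⟩) <;> exact ⟨hO, hc⟩
  have hdisj2 : Disjoint
      ((orbitsOf (permEdgeE (n := n) (m := m) π)).filter
          fun O => O.card = l ∧ ∀ e ∈ O, e.isLeft)
      ((orbitsOf (permEdgeE (n := n) (m := m) π)).filter
          fun O => O.card = l ∧ ∀ e ∈ O, e.isRight) := by
    rw [Finset.disjoint_left]
    intro O hOL hOR
    simp only [Finset.mem_filter] at hOL hOR
    obtain ⟨a, -, rfl⟩ := Finset.mem_image.1 hOL.1
    have hLa := hOL.2.2 a (self_mem_orbitOf _ a)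
    have hRa := hOR.2.2 a (self_mem_orbitOf _ a)
    cases a <;> simp_all
  rw [hsplit, Finset.prod_union hdisj2]
  congr 1
  · rcases eq_or_ne (tU (permEdgeE (n := n) (m := m) π) l) 0 with h0 | h0
    · have hempty : ((orbitsOf (permEdgeE (n := n) (m := m) π)).filter
          fun O => O.card = l ∧ ∀ e ∈ O, e.isLeft) = ∅ := Finset.card_eq_zero.1 h0
      rw [hempty, Finset.prod_empty, h0, pow_zero]
    · obtain ⟨hrL, hrc⟩ := hrepU l h0
      have hrall : ∀ e' ∈ orbitOf (permEdgeE (n := n) (m := m) π) (repU l), e'.isLeft := by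
        intro e' he'
        rw [isLeft_of_mem_orbitOf he']
        exact hrL
      have hrepval : genF w1 w2 π x y z (orbitOf (permEdgeE (n := n) (m := m) π) (repU l))
          = cycGF w1 x z l := by
        rw [genF_orbit_left w1 w2 π x y z (repU l) hrall, hrc]
      have hprod : ∏ O ∈ ((orbitsOf (permEdgeE (n := n) (m := m) π)).filter
            fun O => O.card = l ∧ ∀ e ∈ O, e.isLeft), genF w1 w2 π x y z O
          = ∏ _O ∈ ((orbitsOf (permEdgeE (n := n) (m := m) π)).filter
            fun O => O.card = l ∧ ∀ e ∈ O, e.isLeft), cycGF w1 x z l := by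
        refine Finset.prod_congr rfl fun O hO => ?_
        simp only [Finset.mem_filter] at hO
        obtain ⟨hOmem, hc, hall⟩ := hO
        obtain ⟨a, -, rfl⟩ := Finset.mem_image.1 hOmem
        rw [genF_orbit_left w1 w2 π x y z a hall, hc]
      rw [hprod, Finset.prod_const, hrepval]
      rfl
  · rcases eq_or_ne (tA (permEdgeE (n := n) (m := m) π) l) 0 with h0 | h0
    · have hempty : ((orbitsOf (permEdgeE (n := n) (m := m) π)).filter
          fun O => O.card = l ∧ ∀ e ∈ O, e.isRight) = ∅ := Finset.card_eq_zero.1 h0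
      rw [hempty, Finset.prod_empty, h0, pow_zero]
    · obtain ⟨hrR, hrc⟩ := hrepA l h0
      have hrall : ∀ e' ∈ orbitOf (permEdgeE (n := n) (m := m) π) (repA l), e'.isRight := by
        intro e' he'
        rw [isRight_of_mem_orbitOf he']
        exact hrR
      have hrepval : genF w1 w2 π x y z (orbitOf (permEdgeE (n := n) (m := m) π) (repA l))
          = cycGF w2 y z l := by
        rw [genF_orbit_right w1 w2 π x y z (repA l) hrall, hrc]
      have hprod : ∏ O ∈ ((orbitsOf (permEdgeE (n := n) (m := m) π)).filter
            fun O => O.card = l ∧ ∀ e ∈ O, e.isRight), genF w1 w2 π x y z O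
          = ∏ _O ∈ ((orbitsOf (permEdgeE (n := n) (m := m) π)).filter
            fun O => O.card = l ∧ ∀ e ∈ O, e.isRight), cycGF w2 y z l := by
        refine Finset.prod_congr rfl fun O hO => ?_
        simp only [Finset.mem_filter] at hO
        obtain ⟨hOmem, hc, hall⟩ := hO
        obtain ⟨a, -, rfl⟩ := Finset.mem_image.1 hOmem
        rw [genF_orbit_right w1 w2 π x y z a hall, hc]
      rw [hprod, Finset.prod_const, hrepval]
      rfl

end
end

section
/- For every x ∈ [0,1], log(1 − 2x + 2x²) ≥ −2x; and for every x ∈ [0,1], log((1 − 3x + 3x²)/(1 − 2x + 2x²)²) ≤ x. -/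
/-- Two elementary logarithmic inequalities used in the converse proof:
for all `x ∈ [0,1]`, `log(1 − 2x + 2x²) ≥ −2x` and
`log((1 − 3x + 3x²)/(1 − 2x + 2x²)²) ≤ x`. -/
theorem converse_log_inequalities :
    ∀ x ∈ Set.Icc (0 : ℝ) 1,
      -2 * x ≤ Real.log (1 - 2 * x + 2 * x ^ 2) ∧
      Real.log ((1 - 3 * x + 3 * x ^ 2) / (1 - 2 * x + 2 * x ^ 2) ^ 2) ≤ x := by
  intro x hx
  obtain ⟨hx0, hx1⟩ := hx
  have h2 : (0:ℝ) < 1 - 2 * x + 2 * x ^ 2 := by nlinarith [sq_nonneg (1 - x), sq_nonneg x]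
  have h3 : (0:ℝ) < 1 - 3 * x + 3 * x ^ 2 := by nlinarith [sq_nonneg (1 - 2*x)]
  constructor
  · rw [Real.le_log_iff_exp_le h2]
    have hq : 1 + 2*x + (2*x) ^ 2 / 2 ≤ Real.exp (2*x) :=
      Real.quadratic_le_exp_of_nonneg (by linarith)
    have hinv : Real.exp (-2 * x) = (Real.exp (2*x))⁻¹ := by
      rw [← Real.exp_neg]; ring_nf
    rw [hinv, inv_le_iff_one_le_mul₀ (Real.exp_pos _)]
    calc (1:ℝ) ≤ (1 + 2*x + (2*x)^2/2) * (1 - 2*x + 2*x^2) := by nlinarith [pow_le_pow_left₀ hx0 hx1 4]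
    _ ≤ Real.exp (2*x) * (1 - 2*x + 2*x^2) := mul_le_mul_of_nonneg_right hq h2.le
    _ = (1 - 2*x + 2*x^2) * Real.exp (2*x) := mul_comm _ _
  · have hpos : (0:ℝ) < (1 - 3 * x + 3 * x ^ 2) / (1 - 2 * x + 2 * x ^ 2) ^ 2 :=
      div_pos h3 (by positivity)
    rw [Real.log_le_iff_le_exp hpos, div_le_iff₀ (by positivity)]
    calc 1 - 3 * x + 3 * x ^ 2 ≤ (1 + x) * (1 - 2*x + 2*x^2)^2 := by
          nlinarith [mul_nonneg hx0 (sq_nonneg (x - 2/3)), sq_nonneg x, mul_nonneg (mul_nonneg hx0 hx0) (sq_nonneg (x - 2/3))]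
    _ ≤ Real.exp x * (1 - 2*x + 2*x^2)^2 := by
          apply mul_le_mul_of_nonneg_right _ (by positivity)
          linarith [Real.add_one_le_exp x]
end
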